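/- There exists a dense Gδ subset R of P([0,1]^d) (with the weak topology) such that every measure μ ∈ R satisfies τ_μ(q) = d(q − 1) for every q ∈ [0,1]. -/

import Mathlib

open MeasureTheory Metric Filter Set
open scoped ENNReal NNReal Topology

noncomputable section

/-- The unit cube `[0,1]^d` of `ℝ^d` equipped with the supremum metric,
viewed as a (compact) metric space. -/
abbrev Cube (d : ℕ) : Type := ↥(Set.Icc (0 : Fin d → ℝ) 1)

/-- The local (lower) dimension `h_μ(x) = liminf_{r → 0⁺} log μ(B(x,r)) / log r`. -/
noncomputable def locDim {d : ℕ} (μ : Measure (Cube d)) (x : Cube d) : EReal :=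
  Filter.liminf
    (fun r : ℝ => ENNReal.log (μ (Metric.ball x r)) / (Real.log r : EReal))
    (nhdsWithin 0 (Set.Ioi 0))

/-- The level set `E_μ(h) = {x : h_μ(x) = h}`. -/
def levelSet {d : ℕ} (μ : Measure (Cube d)) (h : ℝ) : Set (Cube d) :=
  {x | locDim μ x = (h : EReal)}

/-- The dyadic cube `I_{j,k} = ∏ᵢ [kᵢ 2^{-j}, (kᵢ+1) 2^{-j})`, as a subset of the cube. -/
def dyadicCube (d j : ℕ) (k : Fin d → Fin (2 ^ j)) : Set (Cube d) :=
  {x | ∀ i, (k i : ℝ) / 2 ^ j ≤ (x : Fin d → ℝ) i ∧ (x : Fin d → ℝ) i < ((k i : ℝ) + 1) / 2 ^ j}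

/-- `s_j(q) = Σ_{Q ∈ G_j, μ(Q) ≠ 0} μ(Q)^q`. -/
def dyadicSum {d : ℕ} (μ : Measure (Cube d)) (q : ℝ) (j : ℕ) : ℝ :=
  ∑ k ∈ Finset.univ.filter (fun k : Fin d → Fin (2 ^ j) => μ (dyadicCube d j k) ≠ 0),
    (μ (dyadicCube d j k)).toReal ^ q

/-- The `L^q`-spectrum `τ_μ(q) = liminf_j -(1/j) log₂ s_j(q)`. -/
def lqSpectrum {d : ℕ} (μ : Measure (Cube d)) (q : ℝ) : EReal :=
  Filter.liminf
    (fun j : ℕ => ((-(1 / (j : ℝ)) * Real.logb 2 (dyadicSum μ q j) : ℝ) : EReal))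
    Filter.atTop

/-! Every probability measure satisfies `s_j(q) ≤ 2^{jd(1-q)}` for `q ∈ [0,1]`, by Jensen's
inequality for the concave map `x ↦ x^q`, so `τ_μ(q) ≥ d(q-1)` always. Conversely, if for
infinitely many `j` every dyadic cube of generation `j` has mass at least `2^{-j(d+ε)}`, then
`s_j(q) ≥ 2^{j(d-(d+ε)q)}` along these `j`, so `τ_μ(q) ≤ d(q-1) + ε`. Asking this for `ε = 1/(m+1)`
and every `m`, on open dyadic cubes, defines a `Gδ` set, since `μ ↦ μ(G)` is lower semicontinuous
for open `G`. It is dense: it contains every mixture `(1-t)μ + t·Leb` with `t > 0`, and these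
tend to `μ` as `t → 0`. -/

section DyadicCubes

variable {d j : ℕ}

def openDyadicCube (d j : ℕ) (k : Fin d → Fin (2 ^ j)) : Set (Cube d) :=
  {x | ∀ i, (k i : ℝ) / 2 ^ j < (x : Fin d → ℝ) i ∧ (x : Fin d → ℝ) i < ((k i : ℝ) + 1) / 2 ^ j}

lemma openDyadicCube_subset_dyadicCube (k : Fin d → Fin (2 ^ j)) :
    openDyadicCube d j k ⊆ dyadicCube d j k :=
  fun _ hx i => ⟨(hx i).1.le, (hx i).2⟩

lemma continuous_cube_apply (i : Fin d) : Continuous fun x : Cube d => (x : Fin d → ℝ) i :=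
  (continuous_apply i).comp continuous_subtype_val

lemma isOpen_openDyadicCube (k : Fin d → Fin (2 ^ j)) : IsOpen (openDyadicCube d j k) := by
  simp only [openDyadicCube, ofPred_forall, ofPred_and]
  exact isOpen_iInter_of_finite fun i =>
    (isOpen_lt continuous_const (continuous_cube_apply i)).inter
      (isOpen_lt (continuous_cube_apply i) continuous_const)

lemma measurableSet_dyadicCube (k : Fin d → Fin (2 ^ j)) : MeasurableSet (dyadicCube d j k) := by
  simp only [dyadicCube, ofPred_forall, ofPred_and]
  exact MeasurableSet.iInter fun i =>
    (measurableSet_le measurable_const (continuous_cube_apply i).measurable).inter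
      (measurableSet_lt (continuous_cube_apply i).measurable measurable_const)

lemma floor_eq_of_mem_dyadicCube {k : Fin d → Fin (2 ^ j)} {x : Cube d}
    (hx : x ∈ dyadicCube d j k) (i : Fin d) : ⌊(x : Fin d → ℝ) i * 2 ^ j⌋₊ = k i := by
  have h2j : (0 : ℝ) < 2 ^ j := by positivity
  rw [Nat.floor_eq_iff (mul_nonneg (x.2.1 i) h2j.le), ← div_le_iff₀ h2j, ← lt_div_iff₀ h2j]
  exact hx i

open Function in
lemma pairwise_disjoint_dyadicCube : Pairwise (Disjoint on (dyadicCube d j)) := by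
  intro k k' hne
  refine Set.disjoint_left.2 fun x hx hx' => hne (funext fun i => Fin.ext ?_)
  rw [← floor_eq_of_mem_dyadicCube hx, floor_eq_of_mem_dyadicCube hx']

lemma card_dyadicIndex : Fintype.card (Fin d → Fin (2 ^ j)) = 2 ^ (j * d) := by
  simp [pow_mul]

end DyadicCubes

section LowerBound

lemma sum_rpow_le_card_rpow {ι : Type*} (s : Finset ι) {a : ι → ℝ} (ha : ∀ i ∈ s, 0 ≤ a i)
    (hsum : ∑ i ∈ s, a i ≤ 1) {q : ℝ} (hq0 : 0 ≤ q) (hq1 : q ≤ 1) :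
    ∑ i ∈ s, a i ^ q ≤ (s.card : ℝ) ^ (1 - q) := by
  rcases s.eq_empty_or_nonempty with rfl | hs
  · simpa using Real.rpow_nonneg le_rfl (1 - q)
  set N : ℝ := (s.card : ℝ)
  have hN : 0 < N := by simpa [N] using hs.card_pos
  have jensen := (Real.concaveOn_rpow hq0 hq1).le_map_sum (t := s) (w := fun _ => N⁻¹) (p := a)
    (fun _ _ => by positivity) (by simp [N, hN.ne']) ha
  simp only [smul_eq_mul, ← Finset.mul_sum] at jensen
  calc ∑ i ∈ s, a i ^ q = N * (N⁻¹ * ∑ i ∈ s, a i ^ q) := by field_simp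
    _ ≤ N * (N⁻¹ * ∑ i ∈ s, a i) ^ q := by gcongr
    _ ≤ N * N⁻¹ ^ q := by
      gcongr
      · exact mul_nonneg (by positivity) (Finset.sum_nonneg ha)
      · exact mul_le_of_le_one_right (by positivity) hsum
    _ = N ^ (1 - q) := by
      rw [Real.inv_rpow hN.le, Real.rpow_sub hN, Real.rpow_one, div_eq_mul_inv]

variable {d : ℕ}

lemma dyadicSum_nonneg (μ : Measure (Cube d)) (q : ℝ) (j : ℕ) : 0 ≤ dyadicSum μ q j :=
  Finset.sum_nonneg fun _ _ => Real.rpow_nonneg ENNReal.toReal_nonneg q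

lemma dyadicSum_le (μ : Measure (Cube d)) [IsProbabilityMeasure μ] {q : ℝ} (hq0 : 0 ≤ q)
    (hq1 : q ≤ 1) (j : ℕ) : dyadicSum μ q j ≤ 2 ^ (j * (d * (1 - q)) : ℝ) := by
  set s := Finset.univ.filter (fun k : Fin d → Fin (2 ^ j) => μ (dyadicCube d j k) ≠ 0)
  have hmass : ∑ k ∈ s, μ.real (dyadicCube d j k) ≤ 1 := by
    rw [← measureReal_biUnion_finset (μ := μ) (pairwise_disjoint_dyadicCube.set_pairwise _)
      (fun k _ => measurableSet_dyadicCube k)]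
    exact measureReal_le_one
  calc dyadicSum μ q j ≤ (s.card : ℝ) ^ (1 - q) :=
        sum_rpow_le_card_rpow s (fun _ _ => measureReal_nonneg) hmass hq0 hq1
    _ ≤ ((2 ^ (j * d) : ℕ) : ℝ) ^ (1 - q) := by
        gcongr
        exact_mod_cast s.card_le_univ.trans_eq card_dyadicIndex
    _ = 2 ^ (j * (d * (1 - q)) : ℝ) := by
        push_cast
        rw [← Real.rpow_natCast, ← Real.rpow_mul zero_le_two]
        push_cast
        ring_nf

lemma neg_le_neg_one_div_mul_logb {S c : ℝ} {j : ℕ} (hc : 0 ≤ c) (hS0 : 0 ≤ S)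
    (hS : S ≤ 2 ^ (j * c)) : -c ≤ -(1 / j) * Real.logb 2 S := by
  rcases hS0.eq_or_lt with rfl | hS0
  · simpa using hc
  rcases j.eq_zero_or_pos with rfl | hj
  · simpa using hc
  have hlog : Real.logb 2 S ≤ j * c := (Real.logb_le_iff_le_rpow one_lt_two hS0).2 hS
  calc -c = -(1 / j) * (j * c) := by field_simp
    _ ≤ -(1 / j) * Real.logb 2 S := mul_le_mul_of_nonpos_left hlog (by simp)

lemma le_lqSpectrum (μ : Measure (Cube d)) [IsProbabilityMeasure μ] {q : ℝ} (hq0 : 0 ≤ q)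
    (hq1 : q ≤ 1) : (((d : ℝ) * (q - 1) : ℝ) : EReal) ≤ lqSpectrum μ q := by
  refine le_liminf_of_le (by isBoundedDefault) (Eventually.of_forall fun j => ?_)
  have := neg_le_neg_one_div_mul_logb (by nlinarith) (dyadicSum_nonneg μ q j)
    (dyadicSum_le μ hq0 hq1 j)
  exact EReal.coe_le_coe_iff.2 (by linarith)

end LowerBound

section UpperBound

lemma liminf_coe_le_of_frequently_le {ι : Type*} {l : Filter ι} {u : ι → ℝ} {c : ℝ}
    (h : ∀ m : ℕ, ∃ᶠ i in l, u i ≤ c + 1 / (m + 1)) :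
    liminf (fun i => (u i : EReal)) l ≤ c := by
  refine EReal.le_of_forall_lt_iff_le.1 fun z hz => ?_
  obtain ⟨m, hm⟩ := exists_nat_one_div_lt (sub_pos.2 (EReal.coe_lt_coe_iff.1 hz))
  exact liminf_le_of_frequently_le ((h m).mono fun i hi => EReal.coe_le_coe_iff.2 (by linarith))

lemma neg_one_div_mul_logb_le {S c : ℝ} {j : ℕ} (hj : 0 < j) (hS : 2 ^ (j * c) ≤ S) :
    -(1 / j) * Real.logb 2 S ≤ -c := by
  have hlog : j * c ≤ Real.logb 2 S :=
    (Real.le_logb_iff_rpow_le one_lt_two ((Real.rpow_pos_of_pos two_pos _).trans_le hS)).2 hS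
  calc -(1 / j) * Real.logb 2 S ≤ -(1 / j) * (j * c) :=
        mul_le_mul_of_nonpos_left hlog (by simp)
    _ = -c := by field_simp

variable {d : ℕ}

lemma pow_mul_rpow_le_dyadicSum (μ : Measure (Cube d)) {q δ : ℝ} (hq : 0 ≤ q) (hδ : 0 < δ)
    {j : ℕ} (h : ∀ k, δ ≤ μ.real (dyadicCube d j k)) :
    2 ^ (j * d) * δ ^ q ≤ dyadicSum μ q j := by
  have hnull : ∀ k, μ (dyadicCube d j k) ≠ 0 := fun k h0 => by
    simpa [measureReal_def, h0, hδ.not_ge] using h k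
  calc (2 : ℝ) ^ (j * d) * δ ^ q = ∑ _k : Fin d → Fin (2 ^ j), δ ^ q := by
        simp [pow_mul]
    _ ≤ dyadicSum μ q j := by
        rw [dyadicSum, Finset.filter_true_of_mem fun k _ => hnull k]
        gcongr with k
        exact h k

def ChargesDyadicCubes (μ : Measure (Cube d)) (ε : ℝ) (j : ℕ) : Prop :=
  ∀ k, (2 : ℝ) ^ (-(j * (d + ε))) < μ.real (openDyadicCube d j k)

lemma neg_one_div_mul_logb_dyadicSum_le (μ : Measure (Cube d)) [IsFiniteMeasure μ] {q ε : ℝ}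
    (hq0 : 0 ≤ q) (hq1 : q ≤ 1) (hε : 0 ≤ ε) {j : ℕ} (hj : 0 < j)
    (h : ChargesDyadicCubes μ ε j) :
    -(1 / j) * Real.logb 2 (dyadicSum μ q j) ≤ d * (q - 1) + ε := by
  have hsum := pow_mul_rpow_le_dyadicSum μ hq0 (Real.rpow_pos_of_pos two_pos _)
    fun k => (h k).le.trans (measureReal_mono (openDyadicCube_subset_dyadicCube k))
  have hexp : (2 : ℝ) ^ (j * d) * ((2 : ℝ) ^ (-(j * (d + ε)))) ^ q
      = 2 ^ (j * (d - (d + ε) * q)) := by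
    rw [← Real.rpow_natCast, ← Real.rpow_mul zero_le_two, ← Real.rpow_add two_pos]
    push_cast
    ring_nf
  have := neg_one_div_mul_logb_le hj (hexp ▸ hsum)
  nlinarith

lemma lqSpectrum_le_of_frequently_chargesDyadicCubes (μ : Measure (Cube d)) [IsFiniteMeasure μ]
    {q : ℝ} (hq0 : 0 ≤ q) (hq1 : q ≤ 1)
    (h : ∀ m : ℕ, ∃ᶠ j in atTop, ChargesDyadicCubes μ (1 / (m + 1)) j) :
    lqSpectrum μ q ≤ (((d : ℝ) * (q - 1) : ℝ) : EReal) :=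
  liminf_coe_le_of_frequently_le fun m =>
    ((h m).and_eventually (eventually_gt_atTop 0)).mono fun _ ⟨hj, hpos⟩ =>
      neg_one_div_mul_logb_dyadicSum_le μ hq0 hq1 (by positivity) hpos hj

end UpperBound

namespace MeasureTheory.ProbabilityMeasure

variable {Ω : Type*} [MeasurableSpace Ω]

def mix (μ ν : ProbabilityMeasure Ω) (t : unitInterval) : ProbabilityMeasure Ω :=
  ⟨ENNReal.ofReal (1 - t) • (μ : Measure Ω) + ENNReal.ofReal t • (ν : Measure Ω), ⟨by
    simp [← ENNReal.ofReal_add (unitInterval.one_minus_nonneg t) (unitInterval.nonneg t)]⟩⟩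

variable (μ ν : ProbabilityMeasure Ω) (t : unitInterval)

@[simp]
lemma mix_zero : μ.mix ν 0 = μ :=
  Subtype.ext (by simp [mix])

lemma measureReal_mix (s : Set Ω) :
    (μ.mix ν t : Measure Ω).real s
      = (1 - (t : ℝ)) * (μ : Measure Ω).real s + t * (ν : Measure Ω).real s := by
  have hfin (c : ℝ) (ρ : ProbabilityMeasure Ω) : (ENNReal.ofReal c • (ρ : Measure Ω)) s ≠ ⊤ :=
    ENNReal.mul_ne_top ENNReal.ofReal_ne_top (measure_ne_top _ _)
  rw [mix, coe_mk, measureReal_add_apply (hfin _ μ) (hfin _ ν), measureReal_ennreal_smul_apply,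
    measureReal_ennreal_smul_apply, ENNReal.toReal_ofReal (unitInterval.one_minus_nonneg t),
    ENNReal.toReal_ofReal (unitInterval.nonneg t)]

variable [TopologicalSpace Ω] [OpensMeasurableSpace Ω]

lemma integral_mix (f : BoundedContinuousFunction Ω ℝ) :
    ∫ x, f x ∂(μ.mix ν t) = (1 - (t : ℝ)) * ∫ x, f x ∂μ + t * ∫ x, f x ∂ν := by
  rw [mix, coe_mk, integral_add_measure, integral_smul_measure, integral_smul_measure]
  · simp [unitInterval.one_minus_nonneg t, unitInterval.nonneg t]
  · exact (f.integrable _).smul_measure ENNReal.ofReal_ne_top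
  · exact (f.integrable _).smul_measure ENNReal.ofReal_ne_top

lemma continuous_mix : Continuous (μ.mix ν) :=
  continuous_iff_forall_continuous_integral.2 fun f => by
    simp only [integral_mix]
    fun_prop

lemma isOpen_setOf_lt_measureReal [HasOuterApproxClosed Ω] {G : Set Ω}
    (hG : IsOpen G) {c : ℝ} (hc : 0 ≤ c) :
    IsOpen {ρ : ProbabilityMeasure Ω | c < (ρ : Measure Ω).real G} := by
  have hset : {ρ : ProbabilityMeasure Ω | c < (ρ : Measure Ω).real G}
      = {ρ : ProbabilityMeasure Ω | ENNReal.ofReal c < (ρ : Measure Ω) G} := by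
    ext ρ
    exact (ENNReal.ofReal_lt_iff_lt_toReal hc (measure_ne_top _ _)).symm
  rw [hset, isOpen_iff_mem_nhds]
  exact fun ρ hρ => eventually_lt_of_lt_liminf
    (hρ.trans_le (le_liminf_measure_open_of_tendsto tendsto_id hG))

end MeasureTheory.ProbabilityMeasure

section Typical

variable {d j : ℕ}

lemma measurableEmbedding_cube_val :
    MeasurableEmbedding (Subtype.val : Cube d → (Fin d → ℝ)) :=
  MeasurableEmbedding.subtype_coe measurableSet_Icc

def cubeVolume (d : ℕ) : ProbabilityMeasure (Cube d) :=
  ⟨Measure.comap Subtype.val volume, ⟨by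
    rw [measurableEmbedding_cube_val.comap_apply, image_univ, Subtype.range_coe,
      Real.volume_Icc_pi]
    simp⟩⟩

lemma image_val_openDyadicCube (k : Fin d → Fin (2 ^ j)) :
    Subtype.val '' openDyadicCube d j k =
      univ.pi fun i => Ioo ((k i : ℝ) / 2 ^ j) (((k i : ℝ) + 1) / 2 ^ j) := by
  refine Subset.antisymm (fun _ ⟨x, hx, hxy⟩ => hxy ▸ fun i _ => hx i) fun y hy => ?_
  have hk (i : Fin d) : ((k i : ℝ) + 1) / 2 ^ j ≤ 1 :=
    div_le_one_of_le₀ (by exact_mod_cast (k i).isLt) (by positivity)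
  have hy01 : y ∈ Icc (0 : Fin d → ℝ) 1 :=
    ⟨fun i => ((by positivity : (0 : ℝ) ≤ (k i : ℝ) / 2 ^ j).trans_lt (hy i trivial).1).le,
      fun i => ((hy i trivial).2.trans_le (hk i)).le⟩
  exact ⟨⟨y, hy01⟩, fun i => hy i trivial, rfl⟩

lemma measureReal_cubeVolume_openDyadicCube (k : Fin d → Fin (2 ^ j)) :
    (cubeVolume d : Measure (Cube d)).real (openDyadicCube d j k) = 2 ^ (-(j * d : ℝ)) := by
  have hside (i : Fin d) : ((k i : ℝ) + 1) / 2 ^ j - (k i : ℝ) / 2 ^ j = (2 ^ j)⁻¹ := by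
    field_simp
    ring
  rw [measureReal_def, cubeVolume, ProbabilityMeasure.coe_mk,
    measurableEmbedding_cube_val.comap_apply, image_val_openDyadicCube, Real.volume_pi_Ioo]
  simp only [hside, Finset.prod_const, Finset.card_univ, Fintype.card_fin, ENNReal.toReal_pow,
    ENNReal.toReal_ofReal (by positivity : (0 : ℝ) ≤ (2 ^ j)⁻¹)]
  rw [Real.rpow_neg zero_le_two, Real.rpow_mul zero_le_two, Real.rpow_natCast, Real.rpow_natCast,
    inv_pow]

lemma eventually_chargesDyadicCubes_mix_cubeVolume (μ : ProbabilityMeasure (Cube d))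
    {t : unitInterval} (ht : 0 < t) {ε : ℝ} (hε : 0 < ε) :
    ∀ᶠ j in atTop, ChargesDyadicCubes (μ.mix (cubeVolume d) t : Measure (Cube d)) ε j := by
  have hlim : Tendsto (fun j : ℕ => (2 : ℝ) ^ (-(j * ε))) atTop (𝓝 0) := by
    refine (tendsto_pow_atTop_nhds_zero_of_lt_one (Real.rpow_nonneg zero_le_two (-ε))
      (Real.rpow_lt_one_of_one_lt_of_neg one_lt_two (neg_neg_of_pos hε))).congr fun j => ?_
    rw [← Real.rpow_natCast, ← Real.rpow_mul zero_le_two]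
    ring_nf
  filter_upwards [hlim.eventually (gt_mem_nhds (show (0 : ℝ) < t from ht))] with j hj k
  calc (2 : ℝ) ^ (-(j * (d + ε))) = 2 ^ (-(j * d : ℝ)) * 2 ^ (-(j * ε)) := by
        rw [← Real.rpow_add two_pos]
        ring_nf
    _ < 2 ^ (-(j * d : ℝ)) * t := by gcongr
    _ = t * (cubeVolume d : Measure (Cube d)).real (openDyadicCube d j k) := by
        rw [measureReal_cubeVolume_openDyadicCube, mul_comm]
    _ ≤ (μ.mix (cubeVolume d) t : Measure (Cube d)).real (openDyadicCube d j k) := by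
        rw [ProbabilityMeasure.measureReal_mix]
        exact le_add_of_nonneg_left
          (mul_nonneg (unitInterval.one_minus_nonneg t) measureReal_nonneg)

def typicalMeasures (d : ℕ) : Set (ProbabilityMeasure (Cube d)) :=
  {μ | ∀ m : ℕ, ∃ᶠ j in atTop, ChargesDyadicCubes (μ : Measure (Cube d)) (1 / (m + 1)) j}

lemma isOpen_setOf_chargesDyadicCubes (ε : ℝ) (j : ℕ) :
    IsOpen {μ : ProbabilityMeasure (Cube d) | ChargesDyadicCubes (μ : Measure (Cube d)) ε j} := by
  simp only [ChargesDyadicCubes, ofPred_forall]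
  exact isOpen_iInter_of_finite fun k =>
    ProbabilityMeasure.isOpen_setOf_lt_measureReal (isOpen_openDyadicCube k) (by positivity)

lemma isGδ_typicalMeasures : IsGδ (typicalMeasures d) := by
  have hset : typicalMeasures d = ⋂ (m : ℕ) (N : ℕ), ⋃ j ≥ N,
      {μ : ProbabilityMeasure (Cube d) |
        ChargesDyadicCubes (μ : Measure (Cube d)) (1 / (m + 1)) j} := by
    ext μ
    simp [typicalMeasures, frequently_atTop]
  rw [hset]
  exact .iInter fun m => .iInter fun N =>
    (isOpen_biUnion fun j _ => isOpen_setOf_chargesDyadicCubes _ j).isGδ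

lemma dense_typicalMeasures : Dense (typicalMeasures d) := by
  intro μ
  have hmix : ∀ t ∈ Ioi (0 : unitInterval), μ.mix (cubeVolume d) t ∈ typicalMeasures d :=
    fun _ ht m => (eventually_chargesDyadicCubes_mix_cubeVolume μ ht (by positivity)).frequently
  have : (𝓝[>] (0 : unitInterval)).NeBot := nhdsGT_neBot_of_exists_gt ⟨1, by simp⟩
  simpa using mem_closure_of_tendsto
    (((ProbabilityMeasure.continuous_mix μ (cubeVolume d)).tendsto 0).mono_left
      nhdsWithin_le_nhds) (eventually_nhdsWithin_of_forall hmix)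

end Typical

theorem typical_measures_lq_spectrum_general (d : ℕ) :
    ∃ R : Set (ProbabilityMeasure (Cube d)), IsGδ R ∧ Dense R ∧
      ∀ μ ∈ R, ∀ q ∈ Set.Icc (0 : ℝ) 1,
        lqSpectrum (μ : Measure (Cube d)) q = (((d : ℝ) * (q - 1) : ℝ) : EReal) :=
  ⟨typicalMeasures d, isGδ_typicalMeasures, dense_typicalMeasures, fun _ hμ _ ⟨hq0, hq1⟩ =>
    le_antisymm (lqSpectrum_le_of_frequently_chargesDyadicCubes _ hq0 hq1 hμ)
      (le_lqSpectrum _ hq0 hq1)⟩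

/-- There is a dense `Gδ` set `R` of probability measures on `[0,1]^d`
(with the weak topology) such that every `μ ∈ R` satisfies `τ_μ(q) = d(q-1)` for all
`q ∈ [0,1]`. -/
theorem typical_measures_lq_spectrum (d : ℕ) (hd : 1 ≤ d) :
    ∃ R : Set (ProbabilityMeasure (Cube d)), IsGδ R ∧ Dense R ∧
      ∀ μ ∈ R, ∀ q ∈ Set.Icc (0 : ℝ) 1,
        lqSpectrum (μ : Measure (Cube d)) q = (((d : ℝ) * (q - 1) : ℝ) : EReal) :=
  typical_measures_lq_spectrum_general d
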